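/- arXiv:2209.07064 — 3 statements merged into one kernel-verified Lean document; each statement's English description precedes it below -/
import Mathlib

section
/- In the mixed-domain multiplication protocol MultiBA, for x ∈ {0,1} shared as x = x₁ ⊕ x₂ (bits) and y ∈ Z_{2^l} shared as y = y₁ + y₂, if party 2 obtains m = (x₂ ⊕ x₁)·y₁ - r₁ and party 1 obtains m' = (x₁ ⊕ x₂)·y₂ - r₂ for random r₁, r₂, then the shares s₁ = r₁ + m' and s₂ = r₂ + m satisfy s₁ + s₂ = x·y (mod 2^l). -/
/-- Embed a bit into `ZMod (2 ^ l)`. -/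
def bit2Z (l : ℕ) (b : Bool) : ZMod (2 ^ l) := if b then 1 else 0

theorem multiBA_correct (l : ℕ) (x₁ x₂ : Bool) (x : Bool) (hx : x = xor x₁ x₂)
    (y y₁ y₂ r₁ r₂ m m' s₁ s₂ : ZMod (2 ^ l)) (hy : y = y₁ + y₂)
    (hm : m = bit2Z l (xor x₂ x₁) * y₁ - r₁)
    (hm' : m' = bit2Z l (xor x₁ x₂) * y₂ - r₂)
    (hs₁ : s₁ = r₁ + m') (hs₂ : s₂ = r₂ + m) :
    s₁ + s₂ = bit2Z l x * y := by
  subst hx hy hm hm' hs₁ hs₂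
  cases x₁ <;> cases x₂ <;> simp [bit2Z] <;> ring
end

section
/- If tuple t★ has minimal attribute sum among a finite set and t is dominated by t★, then removing t from the set does not change the skyline set: a tuple s ≠ t is a skyline tuple of the original set if and only if it is a skyline tuple of the set with t removed. -/
/-- Ordinary dominance of `u` over `v`. -/
def Dominates {m : ℕ} (u v : Fin m → ℝ) : Prop :=
  (∀ j, u j ≤ v j) ∧ ∃ j, u j < v j

/-- `t` is a skyline tuple of the set `S`. -/
def IsSkyline {m : ℕ} (S : Finset (Fin m → ℝ)) (t : Fin m → ℝ) : Prop :=
  ∀ s ∈ S, s ≠ t → ¬ Dominates s t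

theorem erase_dominated_preserves_skyline {m : ℕ} (S : Finset (Fin m → ℝ))
    (hpos : ∀ t ∈ S, ∀ j, (0 : ℝ) ≤ t j)
    (tstar t : Fin m → ℝ) (hstar : tstar ∈ S) (ht : t ∈ S)
    (hmin : ∀ u ∈ S, ∑ j, tstar j ≤ ∑ j, u j)
    (hdom : Dominates tstar t)
    (s : Fin m → ℝ) (hs : s ∈ S) (hne : s ≠ t) :
    IsSkyline S s ↔ IsSkyline (S.erase t) s := by
  constructor
  · intro h u hu hune
    exact h u (Finset.mem_of_mem_erase hu) hune
  · intro h u hu hune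
    by_cases hut : u = t
    · subst hut
      rintro ⟨hle, j, hlt⟩
      obtain ⟨hle', j', hlt'⟩ := hdom
      -- tstar dominates s
      have hdom2 : Dominates tstar s :=
        ⟨fun k => le_trans (hle' k) (hle k), ⟨j', lt_of_lt_of_le hlt' (hle j')⟩⟩
      have hts : tstar ≠ s := by
        rintro rfl
        exact absurd hdom2.2 (by simp)
      have htt : tstar ≠ u := by
        rintro rfl
        exact absurd hlt' (lt_irrefl _)
      exact h tstar (Finset.mem_erase.mpr ⟨htt, hstar⟩) hts hdom2
    · exact h u (Finset.mem_erase.mpr ⟨hut, hu⟩) hune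
end

section
/- The iterative skyline algorithm is correct: repeatedly selecting a minimal-attribute-sum tuple from the remaining mapped database, adding it to the pool, and removing it together with all tuples it dominates, terminates and yields exactly the set of skyline tuples of the original mapped database. -/
open scoped Classical

/-- `alg` implements one algorithm run: on the empty database it returns the empty pool,
and on a nonempty database it selects some minimal-attribute-sum tuple `t★`, adds it to
the pool, and recurses on the database with `t★` and all tuples it dominates removed. -/
noncomputable def IsSkylineAlg {m : ℕ}
    (alg : Finset (Fin m → ℝ) → Finset (Fin m → ℝ)) : Prop :=
  alg ∅ = ∅ ∧
  ∀ S : Finset (Fin m → ℝ), S.Nonempty →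
    ∃ tstar ∈ S, (∀ u ∈ S, ∑ j, tstar j ≤ ∑ j, u j) ∧
      alg S = insert tstar (alg (S.filter fun t => ¬ (t = tstar ∨ Dominates tstar t)))

lemma dominates_trans {m : ℕ} {u v w : Fin m → ℝ}
    (h1 : Dominates u v) (h2 : Dominates v w) : Dominates u w := by
  obtain ⟨h1a, j, h1j⟩ := h1
  obtain ⟨h2a, -⟩ := h2
  exact ⟨fun i => (h1a i).trans (h2a i), ⟨j, lt_of_lt_of_le h1j (h2a j)⟩⟩

lemma skyline_alg_main {m : ℕ}
    (alg : Finset (Fin m → ℝ) → Finset (Fin m → ℝ)) (halg : IsSkylineAlg alg) :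
    ∀ S : Finset (Fin m → ℝ), alg S = S.filter (IsSkyline S) := by
  intro S
  induction S using Finset.strongInduction with
  | _ S ih =>
    rcases S.eq_empty_or_nonempty with rfl | hne
    · simp [halg.1]
    obtain ⟨t, ht, hmin, heq⟩ := halg.2 S hne
    set S' := S.filter (fun x => ¬ (x = t ∨ Dominates t x)) with hS'
    have hmemS' : ∀ x, x ∈ S' ↔ x ∈ S ∧ ¬ (x = t ∨ Dominates t x) := by
      intro x; simp [hS']
    have hsub : S' ⊂ S := by
      refine ⟨Finset.filter_subset _ _, fun h => ?_⟩
      have := (hmemS' t).1 (h ht)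
      simp at this
    have htsky : IsSkyline S t := by
      intro s hs hsne hdom
      have hlt : ∑ j, s j < ∑ j, t j := by
        refine Finset.sum_lt_sum (fun i _ => hdom.1 i) ?_
        obtain ⟨j, hj⟩ := hdom.2
        exact ⟨j, Finset.mem_univ j, hj⟩
      exact absurd (hmin s hs) (not_le.2 hlt)
    rw [heq, ih S' hsub]
    ext x
    simp only [Finset.mem_insert, Finset.mem_filter]
    constructor
    · rintro (rfl | ⟨hx', hsky⟩)
      · exact ⟨ht, htsky⟩
      · obtain ⟨hx, hnd⟩ := (hmemS' x).1 hx'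
        refine ⟨hx, fun s hs hsne hdom => ?_⟩
        by_cases hsS' : s ∈ S'
        · exact hsky s hsS' hsne hdom
        · have hts : s = t ∨ Dominates t s := by
            by_contra h; exact hsS' ((hmemS' s).2 ⟨hs, h⟩)
          rcases hts with rfl | hts
          · exact hnd (Or.inr hdom)
          · exact hnd (Or.inr (dominates_trans hts hdom))
    · rintro ⟨hx, hsky⟩
      by_cases hxt : x = t
      · exact Or.inl hxt
      · refine Or.inr ⟨(hmemS' x).2 ⟨hx, ?_⟩,
          fun s hs hsne hdom => hsky s ((hmemS' s).1 hs).1 hsne hdom⟩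
        rintro (rfl | hd)
        · exact hxt rfl
        · exact hsky t ht (fun h => hxt h.symm) hd

theorem skyline_algorithm_correct {m : ℕ}
    (alg : Finset (Fin m → ℝ) → Finset (Fin m → ℝ)) (halg : IsSkylineAlg alg)
    (T : Finset (Fin m → ℝ)) (hpos : ∀ t ∈ T, ∀ j, (0 : ℝ) ≤ t j) :
    alg T = T.filter (IsSkyline T) := by
  exact skyline_alg_main alg halg T
end
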